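/- arXiv:0904.3094 — 6 statements merged into one kernel-verified Lean document; each statement's English description precedes it below -/
import Mathlib

section
/- Let n ≥ 1, ε > 0, let H : ℝⁿ × ℝⁿ → ℝ be continuously differentiable, and let u : ℝⁿ → ℝ be three times continuously differentiable and satisfy u(x) + H(x, ∇u(x)) = ε Δu(x) for every x ∈ ℝⁿ. Then the function w(x) := |∇u(x)|²/2 satisfies, at every x ∈ ℝⁿ, the identity 2 w(x) + D_pH(x, ∇u(x)) · ∇w(x) + D_xH(x, ∇u(x)) · ∇u(x) = ε Δw(x) − ε |D²u(x)|². -/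
open scoped RealInnerProductSpace

/-- The second partial derivative ∂²u/∂xᵢ∂xₖ of `u` at `x`. -/
noncomputable def pd2 {n : ℕ} (u : EuclideanSpace ℝ (Fin n) → ℝ)
    (x : EuclideanSpace ℝ (Fin n)) (i k : Fin n) : ℝ :=
  fderiv ℝ (fun y => fderiv ℝ u y (EuclideanSpace.single k 1)) x (EuclideanSpace.single i 1)

/-- The Laplacian of `u` at `x`: the sum of the second partial derivatives ∂²u/∂xᵢ². -/
noncomputable def lap {n : ℕ} (u : EuclideanSpace ℝ (Fin n) → ℝ)
    (x : EuclideanSpace ℝ (Fin n)) : ℝ :=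
  ∑ i, pd2 u x i i

/-- |D²u(x)|² : the sum over all i, k of (∂²u/∂xᵢ∂xₖ)². -/
noncomputable def hessSq {n : ℕ} (u : EuclideanSpace ℝ (Fin n) → ℝ)
    (x : EuclideanSpace ℝ (Fin n)) : ℝ :=
  ∑ i, ∑ k, (pd2 u x i k) ^ 2

/-! Differentiating the equation in the direction `∇u(x)` gives, by the chain rule,
`|∇u|² + D_xH · ∇u + D_pH · D²u ∇u = ε ∇(Δu) · ∇u`, and `D²u ∇u = ∇w` because the Hessian is
symmetric. Bochner's formula `Δw = |D²u|² + ∇u · ∇(Δu)`, which rests on the symmetry of third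
derivatives, turns the right-hand side into `ε (Δw - |D²u|²)`. -/

section InnerProductSpace

variable {E F : Type*} [NormedAddCommGroup E] [InnerProductSpace ℝ E] [CompleteSpace E]
  [NormedAddCommGroup F] [InnerProductSpace ℝ F] [CompleteSpace F]

theorem ContDiffAt.gradient {f : E → ℝ} {x : E} {m : WithTop ℕ∞} (hf : ContDiffAt ℝ (m + 1) f x) :
    ContDiffAt ℝ m (gradient f) x :=
  (InnerProductSpace.toDual ℝ E).symm.contDiff.contDiffAt.comp x hf.fderiv_right_succ

theorem inner_fderiv_gradient_apply (f : E → ℝ) (x v w : E) :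
    ⟪fderiv ℝ (gradient f) x v, w⟫ = fderiv ℝ (fderiv ℝ f) x v w := by
  have hgrad : gradient f = (InnerProductSpace.toDual ℝ E).symm ∘ fderiv ℝ f := rfl
  rw [hgrad, LinearIsometryEquiv.comp_fderiv]
  exact InnerProductSpace.toDual_symm_apply

theorem gradient_half_norm_sq_gradient {f : E → ℝ} {x : E} (hf : ContDiffAt ℝ 2 f x) :
    gradient (fun y => ‖gradient f y‖ ^ 2 / 2) x = fderiv ℝ (gradient f) x (gradient f x) := by
  have hgrad : DifferentiableAt ℝ (gradient f) x :=
    (hf.gradient (m := 1)).differentiableAt one_ne_zero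
  have hnorm : HasFDerivAt (fun y => ‖gradient f y‖ ^ 2) _ x := hgrad.hasFDerivAt.norm_sq
  have hw : HasFDerivAt (fun y => ‖gradient f y‖ ^ 2 / 2)
      ((2⁻¹ : ℝ) • (2 • (innerSL ℝ (gradient f x)).comp (fderiv ℝ (gradient f) x))) x := by
    simpa only [div_eq_mul_inv] using hnorm.mul_const (2⁻¹ : ℝ)
  refine ext_inner_right ℝ fun v => ?_
  rw [inner_gradient_left, hw.fderiv, inner_fderiv_gradient_apply,
    ← hf.isSymmSndFDerivAt (by simp), ← inner_fderiv_gradient_apply]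
  simp

theorem fderiv_comp_prodMk_apply {H : E × F → ℝ} {g : E → F} {x : E}
    (hH : DifferentiableAt ℝ H (x, g x)) (hg : DifferentiableAt ℝ g x) (v : E) :
    fderiv ℝ (fun y => H (y, g y)) x v
      = ⟪gradient (fun y => H (y, g x)) x, v⟫
        + ⟪gradient (fun q => H (x, q)) (g x), fderiv ℝ g x v⟫ := by
  have hx : HasFDerivAt (fun y => H (y, g x)) _ x :=
    hH.hasFDerivAt.comp x (hasFDerivAt_prodMk_left x (g x))
  have hq : HasFDerivAt (fun q => H (x, q)) _ (g x) :=
    hH.hasFDerivAt.comp (g x) (hasFDerivAt_prodMk_right x (g x))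
  have hgraph : HasFDerivAt (fun y => H (y, g y)) _ x :=
    hH.hasFDerivAt.comp x ((hasFDerivAt_id x).prodMk hg.hasFDerivAt)
  rw [inner_gradient_left, inner_gradient_left, hx.fderiv, hq.fderiv, hgraph.fderiv]
  simp [← map_add]

end InnerProductSpace

section Euclidean

variable {n : ℕ}

/-- `pd2 u x i k` unfolds to `partialDeriv i (partialDeriv k u) x`. -/
noncomputable def partialDeriv (i : Fin n) (f : EuclideanSpace ℝ (Fin n) → ℝ) :
    EuclideanSpace ℝ (Fin n) → ℝ :=
  fun y => fderiv ℝ f y (EuclideanSpace.single i 1)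

theorem gradient_apply_eq_partialDeriv (f : EuclideanSpace ℝ (Fin n) → ℝ)
    (y : EuclideanSpace ℝ (Fin n)) (k : Fin n) : gradient f y k = partialDeriv k f y := by
  simp [partialDeriv, ← inner_gradient_left, EuclideanSpace.inner_single_right]

theorem fderiv_apply_eq_sum_partialDeriv (f : EuclideanSpace ℝ (Fin n) → ℝ)
    (y v : EuclideanSpace ℝ (Fin n)) : fderiv ℝ f y v = ∑ k, v k * partialDeriv k f y := by
  simp [← inner_gradient_left, PiLp.inner_apply, gradient_apply_eq_partialDeriv]

theorem ContDiff.partialDeriv {f : EuclideanSpace ℝ (Fin n) → ℝ} {m : WithTop ℕ∞}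
    (hf : ContDiff ℝ (m + 1) f) (i : Fin n) : ContDiff ℝ m (partialDeriv i f) :=
  (hf.fderiv_right le_rfl).clm_apply contDiff_const

theorem partialDeriv_partialDeriv_apply {f : EuclideanSpace ℝ (Fin n) → ℝ}
    {y : EuclideanSpace ℝ (Fin n)} (hf : DifferentiableAt ℝ (fderiv ℝ f) y) (i k : Fin n) :
    partialDeriv i (partialDeriv k f) y
      = fderiv ℝ (fderiv ℝ f) y (EuclideanSpace.single i 1) (EuclideanSpace.single k 1) := by
  change fderiv ℝ (fun y => fderiv ℝ f y (EuclideanSpace.single k 1)) y _ = _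
  simp [fderiv_clm_apply hf (differentiableAt_const _)]

theorem partialDeriv_comm {f : EuclideanSpace ℝ (Fin n) → ℝ} (hf : ContDiff ℝ 2 f) (i k : Fin n) :
    partialDeriv i (partialDeriv k f) = partialDeriv k (partialDeriv i f) := by
  have hdiff : Differentiable ℝ (fderiv ℝ f) :=
    (hf.fderiv_right (m := 1) le_rfl).differentiable one_ne_zero
  funext y
  rw [partialDeriv_partialDeriv_apply (hdiff y), partialDeriv_partialDeriv_apply (hdiff y),
    hf.contDiffAt.isSymmSndFDerivAt (by simp)]

theorem partialDeriv_fun_sum {ι : Type*} {s : Finset ι} {f : ι → EuclideanSpace ℝ (Fin n) → ℝ}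
    {y : EuclideanSpace ℝ (Fin n)} (hf : ∀ k ∈ s, DifferentiableAt ℝ (f k) y) (i : Fin n) :
    partialDeriv i (fun y => ∑ k ∈ s, f k y) y = ∑ k ∈ s, partialDeriv i (f k) y := by
  simp [partialDeriv, fderiv_fun_sum hf]

theorem partialDeriv_fun_mul {f g : EuclideanSpace ℝ (Fin n) → ℝ} {y : EuclideanSpace ℝ (Fin n)}
    (hf : DifferentiableAt ℝ f y) (hg : DifferentiableAt ℝ g y) (i : Fin n) :
    partialDeriv i (fun y => f y * g y) y = partialDeriv i f y * g y + f y * partialDeriv i g y := by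
  simp only [partialDeriv, fderiv_fun_mul hf hg, add_apply, smul_apply, smul_eq_mul]
  ring

theorem partialDeriv_half_sq {f : EuclideanSpace ℝ (Fin n) → ℝ} {y : EuclideanSpace ℝ (Fin n)}
    (hf : DifferentiableAt ℝ f y) (i : Fin n) :
    partialDeriv i (fun y => f y ^ 2 / 2) y = f y * partialDeriv i f y := by
  have hsq : (fun y => f y ^ 2 / 2) = fun y => f y * f y * 2⁻¹ := by
    funext y
    ring
  rw [partialDeriv, hsq, ((hf.hasFDerivAt.fun_mul hf.hasFDerivAt).mul_const (2⁻¹ : ℝ)).fderiv]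
  simp only [smul_add, add_apply, smul_apply, smul_eq_mul, partialDeriv]
  ring

theorem lap_eq_sum_partialDeriv (f : EuclideanSpace ℝ (Fin n) → ℝ) :
    lap f = fun y => ∑ i, partialDeriv i (partialDeriv i f) y :=
  rfl

theorem ContDiff.lap {f : EuclideanSpace ℝ (Fin n) → ℝ} {m : WithTop ℕ∞}
    (hf : ContDiff ℝ (m + 1 + 1) f) : ContDiff ℝ m (lap f) := by
  rw [lap_eq_sum_partialDeriv]
  exact ContDiff.sum fun i _ => (hf.partialDeriv i).partialDeriv i

theorem lap_half_sq {f : EuclideanSpace ℝ (Fin n) → ℝ} (hf : ContDiff ℝ 2 f)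
    (x : EuclideanSpace ℝ (Fin n)) :
    lap (fun y => f y ^ 2 / 2) x = f x * lap f x + ∑ i, partialDeriv i f x ^ 2 := by
  have hdiff : Differentiable ℝ f := hf.differentiable two_ne_zero
  have hdiff' (i : Fin n) : Differentiable ℝ (partialDeriv i f) :=
    (hf.partialDeriv (m := 1) i).differentiable one_ne_zero
  have hfirst (i : Fin n) :
      partialDeriv i (fun y => f y ^ 2 / 2) = fun y => f y * partialDeriv i f y :=
    funext fun y => partialDeriv_half_sq (hdiff y) i
  simp only [lap_eq_sum_partialDeriv, hfirst, partialDeriv_fun_mul (hdiff x) (hdiff' _ x),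
    Finset.mul_sum, ← Finset.sum_add_distrib]
  exact Finset.sum_congr rfl fun i _ => by ring

theorem lap_fun_sum {ι : Type*} {s : Finset ι} {f : ι → EuclideanSpace ℝ (Fin n) → ℝ}
    (hf : ∀ k ∈ s, ContDiff ℝ 2 (f k)) (x : EuclideanSpace ℝ (Fin n)) :
    lap (fun y => ∑ k ∈ s, f k y) x = ∑ k ∈ s, lap (f k) x := by
  have hfirst (i : Fin n) :
      partialDeriv i (fun y => ∑ k ∈ s, f k y) = fun y => ∑ k ∈ s, partialDeriv i (f k) y :=
    funext fun y => partialDeriv_fun_sum (fun k hk => (hf k hk).differentiable two_ne_zero y) i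
  simp only [lap_eq_sum_partialDeriv, hfirst]
  rw [Finset.sum_comm]
  refine Finset.sum_congr rfl fun i _ => partialDeriv_fun_sum (fun k hk =>
    ((hf k hk).partialDeriv (m := 1) i).differentiable one_ne_zero x) i

theorem partialDeriv_lap {u : EuclideanSpace ℝ (Fin n) → ℝ} (hu : ContDiff ℝ 3 u) (k : Fin n) :
    partialDeriv k (lap u) = lap (partialDeriv k u) := by
  funext y
  rw [lap_eq_sum_partialDeriv, lap_eq_sum_partialDeriv, partialDeriv_fun_sum fun i _ =>
    ((hu.partialDeriv i).partialDeriv (m := 1) i).differentiable one_ne_zero y]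
  refine Finset.sum_congr rfl fun i _ => ?_
  rw [partialDeriv_comm (hu.partialDeriv (m := 2) i), partialDeriv_comm (hu.of_le (by norm_num)) k i]

theorem half_norm_sq_gradient_eq_sum (u : EuclideanSpace ℝ (Fin n) → ℝ) :
    (fun y => ‖gradient u y‖ ^ 2 / 2) = fun y => ∑ k, partialDeriv k u y ^ 2 / 2 := by
  funext y
  simp [EuclideanSpace.real_norm_sq_eq, gradient_apply_eq_partialDeriv, Finset.sum_div]

theorem lap_half_norm_sq_gradient {u : EuclideanSpace ℝ (Fin n) → ℝ} (hu : ContDiff ℝ 3 u)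
    (x : EuclideanSpace ℝ (Fin n)) :
    lap (fun y => ‖gradient u y‖ ^ 2 / 2) x = hessSq u x + fderiv ℝ (lap u) x (gradient u x) := by
  have hpartial (k : Fin n) : ContDiff ℝ 2 (partialDeriv k u) := hu.partialDeriv k
  have hhess : hessSq u x = ∑ k, ∑ i, partialDeriv i (partialDeriv k u) x ^ 2 :=
    Finset.sum_comm
  rw [half_norm_sq_gradient_eq_sum,
    lap_fun_sum fun k _ => ((hpartial k).pow 2).div_const 2, hhess,
    fderiv_apply_eq_sum_partialDeriv, ← Finset.sum_add_distrib]
  refine Finset.sum_congr rfl fun k _ => ?_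
  rw [lap_half_sq (hpartial k), partialDeriv_lap hu, gradient_apply_eq_partialDeriv]
  ring

end Euclidean

theorem stmt0_general (n : ℕ) (ε : ℝ)
    (H : EuclideanSpace ℝ (Fin n) × EuclideanSpace ℝ (Fin n) → ℝ) (hH : ContDiff ℝ 1 H)
    (u : EuclideanSpace ℝ (Fin n) → ℝ) (hu : ContDiff ℝ 3 u)
    (heq : ∀ x, u x + H (x, gradient u x) = ε * lap u x) :
    ∀ x, 2 * (‖gradient u x‖ ^ 2 / 2)
        + ⟪gradient (fun q => H (x, q)) (gradient u x),
            gradient (fun y => ‖gradient u y‖ ^ 2 / 2) x⟫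
        + ⟪gradient (fun y => H (y, gradient u x)) x, gradient u x⟫
      = ε * lap (fun y => ‖gradient u y‖ ^ 2 / 2) x - ε * hessSq u x := by
  intro x
  have hu_diff : DifferentiableAt ℝ u x := hu.differentiable (by norm_num) x
  have hgrad : DifferentiableAt ℝ (gradient u) x :=
    (hu.contDiffAt.gradient (m := 2)).differentiableAt (by norm_num)
  have hH_diff : DifferentiableAt ℝ H (x, gradient u x) := hH.differentiable one_ne_zero _
  have hgraph : DifferentiableAt ℝ (fun y => H (y, gradient u y)) x :=
    hH_diff.comp x (differentiableAt_id.prodMk hgrad)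
  have hlap : DifferentiableAt ℝ (lap u) x := (hu.lap (m := 1)).differentiable one_ne_zero x
  have hderiv : fderiv ℝ (fun y => u y + H (y, gradient u y)) x (gradient u x)
      = ε * fderiv ℝ (lap u) x (gradient u x) := by
    rw [funext heq, fderiv_const_mul hlap]
    rfl
  rw [fderiv_fun_add hu_diff hgraph, add_apply, fderiv_comp_prodMk_apply hH_diff hgrad,
    ← inner_gradient_left, ← gradient_half_norm_sq_gradient (hu.contDiffAt.of_le (by norm_num)),
    real_inner_self_eq_norm_sq] at hderiv
  rw [lap_half_norm_sq_gradient hu]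
  linarith

theorem stmt0 (n : ℕ) (hn : 1 ≤ n) (ε : ℝ) (hε : 0 < ε)
    (H : EuclideanSpace ℝ (Fin n) × EuclideanSpace ℝ (Fin n) → ℝ) (hH : ContDiff ℝ 1 H)
    (u : EuclideanSpace ℝ (Fin n) → ℝ) (hu : ContDiff ℝ 3 u)
    (heq : ∀ x, u x + H (x, gradient u x) = ε * lap u x) :
    ∀ x, 2 * (‖gradient u x‖ ^ 2 / 2)
        + ⟪gradient (fun q => H (x, q)) (gradient u x),
            gradient (fun y => ‖gradient u y‖ ^ 2 / 2) x⟫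
        + ⟪gradient (fun y => H (y, gradient u x)) x, gradient u x⟫
      = ε * lap (fun y => ‖gradient u y‖ ^ 2 / 2) x - ε * hessSq u x :=
  stmt0_general n ε H hH u hu heq
end

section
/- Let n ≥ 1 and let H : ℝⁿ → ℝ be continuously differentiable and satisfy (H3): there exist γ, δ > 0 such that ∇H(p)·p − γ H(p) ≥ δ for all p ∈ ℝⁿ. Then for every p ∈ ℝⁿ and every t with 0 < t < 1, one has H(t p) ≤ t^{γ} H(p) − (δ/(γ+1)) (1 − t^{γ}). -/
/-!
Along each ray the inequality (H3) says that `G := H + δ / γ` satisfies the differential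
inequality `s G'(s p)·p ≥ γ G(s p)`, so `s ↦ s^(-γ) G(s p)` is nondecreasing on `(0, ∞)`.
Comparing its values at `t` and `1` gives `H(t p) + δ/γ ≤ t^γ (H(p) + δ/γ)`, which is sharper
than the claim because `δ/(γ+1) ≤ δ/γ` and `t^γ ≤ 1`.
-/

open Set
open scoped RealInnerProductSpace

section Subhomogeneous

variable {E : Type*} [NormedAddCommGroup E] [NormedSpace ℝ E] {G : E → ℝ} {γ : ℝ}

theorem hasDerivAt_apply_smul {p : E} {s : ℝ} (hG : DifferentiableAt ℝ G (s • p)) :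
    HasDerivAt (fun s : ℝ => G (s • p)) (fderiv ℝ G (s • p) p) s := by
  have hray : HasDerivAt (fun s : ℝ => s • p) p s := by
    simpa using (hasDerivAt_id s).smul_const p
  exact hG.hasFDerivAt.comp_hasDerivAt s hray

theorem monotoneOn_rpow_neg_mul_apply_smul (hG : Differentiable ℝ G)
    (hEuler : ∀ x, γ * G x ≤ fderiv ℝ G x x) (p : E) :
    MonotoneOn (fun s : ℝ => s ^ (-γ) * G (s • p)) (Ioi 0) := by
  have hderiv : ∀ s ∈ Ioi (0 : ℝ), HasDerivAt (fun s : ℝ => s ^ (-γ) * G (s • p))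
      (-γ * s ^ (-γ - 1) * G (s • p) + s ^ (-γ) * fderiv ℝ G (s • p) p) s := fun s hs =>
    (Real.hasDerivAt_rpow_const (Or.inl (ne_of_gt hs))).mul (hasDerivAt_apply_smul (hG _))
  refine monotoneOn_of_hasDerivWithinAt_nonneg (convex_Ioi 0)
    (fun s hs => (hderiv s hs).continuousAt.continuousWithinAt)
    (fun s hs => (hderiv s (interior_subset hs)).hasDerivWithinAt) fun s hs => ?_
  rw [interior_Ioi] at hs
  have hs0 : (0 : ℝ) < s := hs
  have hEuler_s : γ * G (s • p) ≤ s * fderiv ℝ G (s • p) p := by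
    simpa using hEuler (s • p)
  calc (0 : ℝ)
      ≤ s ^ (-γ - 1) * (s * fderiv ℝ G (s • p) p - γ * G (s • p)) :=
        mul_nonneg (Real.rpow_nonneg hs0.le _) (sub_nonneg.mpr hEuler_s)
    _ = -γ * s ^ (-γ - 1) * G (s • p) + s ^ (-γ) * fderiv ℝ G (s • p) p := by
        rw [Real.rpow_sub_one hs0.ne']
        field_simp
        ring

theorem apply_smul_le_rpow_mul (hG : Differentiable ℝ G)
    (hEuler : ∀ x, γ * G x ≤ fderiv ℝ G x x) (p : E) {t : ℝ} (ht : 0 < t) (ht1 : t ≤ 1) :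
    G (t • p) ≤ t ^ γ * G p := by
  have hmono := monotoneOn_rpow_neg_mul_apply_smul hG hEuler p ht (zero_lt_one' ℝ) ht1
  simp only [Real.one_rpow, one_smul, one_mul] at hmono
  calc G (t • p) = t ^ γ * (t ^ (-γ) * G (t • p)) := by
        rw [← mul_assoc, ← Real.rpow_add ht, add_neg_cancel, Real.rpow_zero, one_mul]
    _ ≤ t ^ γ * G p := mul_le_mul_of_nonneg_left hmono (Real.rpow_nonneg ht.le _)

end Subhomogeneous

theorem stmt5_general (n : ℕ)
    (H : EuclideanSpace ℝ (Fin n) → ℝ) (hH : ContDiff ℝ 1 H)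
    (γ δ : ℝ) (hγ : 0 < γ) (hδ : 0 < δ)
    (hH3 : ∀ p, ⟪gradient H p, p⟫ - γ * H p ≥ δ) :
    ∀ p : EuclideanSpace ℝ (Fin n), ∀ t : ℝ, 0 < t → t < 1 →
      H (t • p) ≤ t ^ γ * H p - δ / (γ + 1) * (1 - t ^ γ) := by
  intro p t ht ht1
  have hdiff : Differentiable ℝ H := hH.differentiable one_ne_zero
  have hEuler : ∀ x, γ * (H x + δ / γ) ≤ fderiv ℝ (fun y => H y + δ / γ) x x := by
    intro x
    rw [fderiv_add_const, ← inner_gradient_left, mul_add, mul_div_cancel₀ _ hγ.ne']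
    linarith [hH3 x]
  have hray := apply_smul_le_rpow_mul (hdiff.add_const _) hEuler p ht ht1.le
  have htγ : t ^ γ ≤ 1 := Real.rpow_le_one ht.le ht1.le hγ.le
  have hcoeff : δ / (γ + 1) ≤ δ / γ := div_le_div_of_nonneg_left hδ.le hγ (by linarith)
  linarith [mul_le_mul_of_nonneg_right hcoeff (sub_nonneg.mpr htγ)]

theorem stmt5 (n : ℕ) (hn : 1 ≤ n)
    (H : EuclideanSpace ℝ (Fin n) → ℝ) (hH : ContDiff ℝ 1 H)
    (γ δ : ℝ) (hγ : 0 < γ) (hδ : 0 < δ)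
    (hH3 : ∀ p, ⟪gradient H p, p⟫ - γ * H p ≥ δ) :
    ∀ p : EuclideanSpace ℝ (Fin n), ∀ t : ℝ, 0 < t → t < 1 →
      H (t • p) ≤ t ^ γ * H p - δ / (γ + 1) * (1 - t ^ γ) :=
  stmt5_general n H hH γ δ hγ hδ hH3
end

section
/- Let n ≥ 1 and let H : ℝⁿ → ℝ be continuously differentiable and satisfy (H3): there exist γ, δ > 0 such that ∇H(p)·p − γ H(p) ≥ δ for all p ∈ ℝⁿ. Then for every p ∈ ℝⁿ and every t > 1, one has H(t p) ≥ t^{γ} H(p) + (δ/(γ+1)) (t^{γ} − 1). -/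
open scoped RealInnerProductSpace

/-! Along the ray `s ↦ s • p`, condition (H3) says that `φ s = H (s • p)` satisfies the
differential inequality `s φ' s - γ φ s ≥ δ`, i.e. `s ^ (-γ) (φ s + δ / γ)` is nondecreasing.
Comparing its values at `1` and `t` gives the bound with `δ / γ`, which is stronger than the
one with `δ / (γ + 1)`. -/

open Set

lemma monotoneOn_rpow_neg_mul_add_div {φ φ' : ℝ → ℝ} {γ δ : ℝ} (hγ : γ ≠ 0)
    (hφ : ∀ s > 0, HasDerivAt φ (φ' s) s) (hφ' : ∀ s > 0, δ ≤ s * φ' s - γ * φ s) :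
    MonotoneOn (fun s ↦ s ^ (-γ) * (φ s + δ / γ)) (Ioi 0) := by
  have hderiv : ∀ s > 0, HasDerivAt (fun s ↦ s ^ (-γ) * (φ s + δ / γ))
      (s ^ (-γ - 1) * (s * φ' s - γ * φ s - δ)) s := by
    intro s hs
    refine ((Real.hasDerivAt_rpow_const (Or.inl hs.ne')).mul
      ((hφ s hs).add_const (δ / γ))).congr_deriv ?_
    rw [Real.rpow_sub_one hs.ne']
    field_simp
    ring
  refine monotoneOn_of_hasDerivWithinAt_nonneg (convex_Ioi 0)
    (fun s hs ↦ (hderiv s hs).continuousAt.continuousWithinAt)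
    (fun s hs ↦ (hderiv s (interior_subset hs)).hasDerivWithinAt) fun s hs ↦ ?_
  rw [interior_Ioi] at hs
  exact mul_nonneg (Real.rpow_nonneg hs.le _) (sub_nonneg.2 (hφ' s hs))

lemma rpow_mul_add_le_of_hasDerivAt {φ φ' : ℝ → ℝ} {γ δ t : ℝ} (hγ : γ ≠ 0)
    (hφ : ∀ s > 0, HasDerivAt φ (φ' s) s) (hφ' : ∀ s > 0, δ ≤ s * φ' s - γ * φ s)
    (ht : 1 ≤ t) :
    t ^ γ * φ 1 + δ / γ * (t ^ γ - 1) ≤ φ t := by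
  have ht₀ : 0 < t := one_pos.trans_le ht
  have hmono := monotoneOn_rpow_neg_mul_add_div hγ hφ hφ' (mem_Ioi.2 one_pos) (mem_Ioi.2 ht₀) ht
  simp only [Real.one_rpow, one_mul, Real.rpow_neg ht₀.le] at hmono
  have hpow : 0 < t ^ γ := Real.rpow_pos_of_pos ht₀ γ
  rw [inv_mul_eq_div, le_div_iff₀ hpow] at hmono
  linarith

lemma DifferentiableAt.hasDerivAt_comp_smul {E : Type*} [NormedAddCommGroup E]
    [InnerProductSpace ℝ E] [CompleteSpace E] {H : E → ℝ} {p : E} {s : ℝ}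
    (hH : DifferentiableAt ℝ H (s • p)) :
    HasDerivAt (fun u : ℝ ↦ H (u • p)) ⟪gradient H (s • p), p⟫ s := by
  have hray : HasDerivAt (fun u : ℝ ↦ u • p) p s := by
    simpa using (hasDerivAt_id s).smul_const p
  have hcomp : HasDerivAt (fun u : ℝ ↦ H (u • p))
      (InnerProductSpace.toDual ℝ E (gradient H (s • p)) p) s :=
    hH.hasGradientAt.hasFDerivAt.comp_hasDerivAt s hray
  rwa [InnerProductSpace.toDual_apply_apply] at hcomp

theorem stmt6_general (n : ℕ)
    (H : EuclideanSpace ℝ (Fin n) → ℝ) (hH : ContDiff ℝ 1 H)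
    (γ δ : ℝ) (hγ : 0 < γ) (hδ : 0 < δ)
    (hH3 : ∀ p, ⟪gradient H p, p⟫ - γ * H p ≥ δ) :
    ∀ p : EuclideanSpace ℝ (Fin n), ∀ t : ℝ, 1 < t →
      H (t • p) ≥ t ^ γ * H p + δ / (γ + 1) * (t ^ γ - 1) := by
  intro p t ht
  have hray := rpow_mul_add_le_of_hasDerivAt (φ := fun s ↦ H (s • p)) hγ.ne'
    (fun s _ ↦ (hH.differentiable one_ne_zero _).hasDerivAt_comp_smul)
    (fun s _ ↦ by simpa [real_inner_smul_right] using hH3 (s • p)) ht.le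
  simp only [one_smul] at hray
  have hpow : 1 ≤ t ^ γ := Real.one_le_rpow ht.le hγ.le
  have hcoeff : δ / (γ + 1) ≤ δ / γ := div_le_div_of_nonneg_left hδ.le hγ (by linarith)
  linarith [mul_le_mul_of_nonneg_right hcoeff (sub_nonneg.2 hpow)]

theorem stmt6 (n : ℕ) (hn : 1 ≤ n)
    (H : EuclideanSpace ℝ (Fin n) → ℝ) (hH : ContDiff ℝ 1 H)
    (γ δ : ℝ) (hγ : 0 < γ) (hδ : 0 < δ)
    (hH3 : ∀ p, ⟪gradient H p, p⟫ - γ * H p ≥ δ) :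
    ∀ p : EuclideanSpace ℝ (Fin n), ∀ t : ℝ, 1 < t →
      H (t • p) ≥ t ^ γ * H p + δ / (γ + 1) * (t ^ γ - 1) :=
  stmt6_general n H hH γ δ hγ hδ hH3
end

section
/- Let n ≥ 1, ε > 0, let U ⊆ ℝⁿ be open, let H : ℝⁿ → ℝ be continuously differentiable, and let u : U → ℝ be three times continuously differentiable and satisfy H(∇u(x)) = ε Δu(x) for every x ∈ U. For real numbers α, β define z(x) := α (x · ∇u(x)) + β u(x). Then at every x ∈ U one has ∇H(∇u(x)) · ∇z(x) − ε Δz(x) = (α + β) ∇H(∇u(x)) · ∇u(x) − (2α + β) ε Δu(x). -/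
/-!
Write `θ = x · ∇` for the Euler operator, so that `z = α θu + β u`. Symmetry of second
derivatives gives the commutator `∂ᵥ θ = θ ∂ᵥ + ∂ᵥ`, hence `Δ(θu) = θ(Δu) + 2 Δu` and, with
`w = ∇H(∇u(x))`, `w · ∇(θu) = w · ∇u + θ(∂_w u)`. Differentiating `H(∇u) = ε Δu` in the direction
`x` yields `θ(∂_w u) = ε θ(Δu)` at `x`, so the third-order terms cancel in `w · ∇z − ε Δz`.
-/

open scoped RealInnerProductSpace

open scoped Topology

section Euler

variable {E F : Type*} [NormedAddCommGroup E] [NormedSpace ℝ E]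
  [NormedAddCommGroup F] [NormedSpace ℝ F]

/-- The Euler operator `x · ∇`. -/
noncomputable def euler (f : E → F) (x : E) : F :=
  fderiv ℝ f x x

lemma ContDiffAt.contDiffAt_fderiv_apply {f : E → F} {x : E} {m : ℕ}
    (hf : ContDiffAt ℝ (m + 1) f x) (v : E) : ContDiffAt ℝ m (fun y => fderiv ℝ f y v) x :=
  (hf.fderiv_right le_rfl).clm_apply contDiffAt_const

lemma ContDiffAt.contDiffAt_euler {f : E → F} {x : E} {m : ℕ} (hf : ContDiffAt ℝ (m + 1) f x) :
    ContDiffAt ℝ m (euler f) x :=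
  (hf.fderiv_right le_rfl).clm_apply contDiffAt_id

lemma ContDiffAt.differentiableAt_fderiv_apply {f : E → F} {x : E} (hf : ContDiffAt ℝ 2 f x)
    (v : E) : DifferentiableAt ℝ (fun y => fderiv ℝ f y v) x :=
  (hf.contDiffAt_fderiv_apply (m := 1) v).differentiableAt one_ne_zero

lemma ContDiffAt.differentiableAt_euler {f : E → F} {x : E} (hf : ContDiffAt ℝ 2 f x) :
    DifferentiableAt ℝ (euler f) x :=
  (hf.contDiffAt_euler (m := 1)).differentiableAt one_ne_zero

lemma fderiv_fderiv_apply {f : E → F} {x : E} (hf : DifferentiableAt ℝ (fderiv ℝ f) x)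
    (v w : E) : fderiv ℝ (fun y => fderiv ℝ f y w) x v = fderiv ℝ (fderiv ℝ f) x v w := by
  rw [fderiv_clm_apply hf (differentiableAt_const w)]
  simp

lemma fderiv_const_mul_add_const_mul_apply {f g : E → ℝ} {x : E} (hf : DifferentiableAt ℝ f x)
    (hg : DifferentiableAt ℝ g x) (a b : ℝ) (v : E) :
    fderiv ℝ (fun y => a * f y + b * g y) x v = a * fderiv ℝ f x v + b * fderiv ℝ g x v := by
  rw [fderiv_fun_add (hf.const_mul a) (hg.const_mul b), fderiv_const_mul hf,
    fderiv_const_mul hg]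
  simp

lemma euler_fun_sum {ι : Type*} (s : Finset ι) {g : ι → E → F} {x : E}
    (hg : ∀ i ∈ s, DifferentiableAt ℝ (g i) x) :
    euler (fun y => ∑ i ∈ s, g i y) x = ∑ i ∈ s, euler (g i) x := by
  simp [euler, fderiv_fun_sum hg]

lemma fderiv_euler_apply {f : E → F} {x : E} (hf : ContDiffAt ℝ 2 f x) (v : E) :
    fderiv ℝ (euler f) x v = euler (fun y => fderiv ℝ f y v) x + fderiv ℝ f x v := by
  have hd : DifferentiableAt ℝ (fderiv ℝ f) x :=
    (hf.fderiv_right one_add_one_eq_two.le).differentiableAt one_ne_zero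
  have hsymm := hf.isSymmSndFDerivAt (by simp [minSmoothness_of_isRCLikeNormedField])
  rw [euler, fderiv_fderiv_apply hd, hsymm, add_comm,
    show euler f = fun y => fderiv ℝ f y (id y) from rfl,
    fderiv_clm_apply hd differentiableAt_id]
  simp

end Euler

section Laplacian

variable {n : ℕ}

lemma lap_const_mul_add_const_mul {f g : EuclideanSpace ℝ (Fin n) → ℝ}
    {x : EuclideanSpace ℝ (Fin n)} (hf : ContDiffAt ℝ 2 f x) (hg : ContDiffAt ℝ 2 g x)
    (a b : ℝ) : lap (fun y => a * f y + b * g y) x = a * lap f x + b * lap g x := by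
  simp only [lap, pd2, Finset.mul_sum, ← Finset.sum_add_distrib]
  refine Finset.sum_congr rfl fun i _ => ?_
  have hev : (fun y => fderiv ℝ (fun y => a * f y + b * g y) y (EuclideanSpace.single i 1))
      =ᶠ[𝓝 x] fun y => a * fderiv ℝ f y (EuclideanSpace.single i 1)
        + b * fderiv ℝ g y (EuclideanSpace.single i 1) := by
    filter_upwards [hf.eventually (by simp), hg.eventually (by simp)] with y hfy hgy
    exact fderiv_const_mul_add_const_mul_apply (hfy.differentiableAt two_ne_zero)
      (hgy.differentiableAt two_ne_zero) a b _
  rw [hev.fderiv_eq, fderiv_const_mul_add_const_mul_apply (hf.differentiableAt_fderiv_apply _)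
    (hg.differentiableAt_fderiv_apply _)]

lemma ContDiffAt.differentiableAt_pd2 {u : EuclideanSpace ℝ (Fin n) → ℝ}
    {x : EuclideanSpace ℝ (Fin n)} (hu : ContDiffAt ℝ 3 u x) (i k : Fin n) :
    DifferentiableAt ℝ (fun y => pd2 u y i k) x :=
  (hu.contDiffAt_fderiv_apply (m := 2) _).differentiableAt_fderiv_apply _

lemma ContDiffAt.differentiableAt_lap {u : EuclideanSpace ℝ (Fin n) → ℝ}
    {x : EuclideanSpace ℝ (Fin n)} (hu : ContDiffAt ℝ 3 u x) : DifferentiableAt ℝ (lap u) x :=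
  DifferentiableAt.fun_sum fun i _ => hu.differentiableAt_pd2 i i

lemma lap_euler {u : EuclideanSpace ℝ (Fin n) → ℝ} {x : EuclideanSpace ℝ (Fin n)}
    (hu : ContDiffAt ℝ 3 u x) : lap (euler u) x = euler (lap u) x + 2 * lap u x := by
  rw [show lap u = fun y => ∑ i, pd2 u y i i from rfl,
    euler_fun_sum _ fun i _ => hu.differentiableAt_pd2 i i, Finset.mul_sum,
    ← Finset.sum_add_distrib]
  refine Finset.sum_congr rfl fun i _ => ?_
  set e : EuclideanSpace ℝ (Fin n) := EuclideanSpace.single i 1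
  have hu' : ContDiffAt ℝ 2 (fun y => fderiv ℝ u y e) x := hu.contDiffAt_fderiv_apply e
  have hev : (fun y => fderiv ℝ (euler u) y e)
      =ᶠ[𝓝 x] fun y => euler (fun y' => fderiv ℝ u y' e) y + fderiv ℝ u y e :=
    (hu.eventually (by simp)).mono fun y hy => fderiv_euler_apply (hy.of_le (by norm_num)) e
  rw [pd2, hev.fderiv_eq, fderiv_fun_add hu'.differentiableAt_euler
    (hu'.differentiableAt two_ne_zero), add_apply, fderiv_euler_apply hu']
  simp only [pd2]
  ring

end Laplacian

section Gradient

variable {F : Type*} [NormedAddCommGroup F] [InnerProductSpace ℝ F] [CompleteSpace F]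

lemma inner_gradient_eq_euler (u : F → ℝ) (x : F) : ⟪x, gradient u x⟫ = euler u x := by
  rw [real_inner_comm, inner_gradient_left]
  rfl

lemma fderiv_comp_gradient_apply {u H : F → ℝ} {x : F} (hu : ContDiffAt ℝ 2 u x)
    (hH : DifferentiableAt ℝ H (gradient u x)) (v : F) :
    fderiv ℝ (fun y => H (gradient u y)) x v
      = fderiv ℝ (fun y => fderiv ℝ u y (gradient H (gradient u x))) x v := by
  have hd : DifferentiableAt ℝ (fderiv ℝ u) x :=
    (hu.fderiv_right one_add_one_eq_two.le).differentiableAt one_ne_zero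
  have hgrad := (InnerProductSpace.toDual ℝ F).symm.toContinuousLinearEquiv.hasFDerivAt.comp x
    hd.hasFDerivAt
  rw [show (fun y => H (gradient u y)) = H ∘ gradient u from rfl,
    (hH.hasFDerivAt.comp x hgrad).fderiv, fderiv_fderiv_apply hd, ContinuousLinearMap.comp_apply,
    ← inner_gradient_left, real_inner_comm]
  exact InnerProductSpace.toDual_symm_apply

end Gradient

theorem stmt9_general (n : ℕ) (ε : ℝ)
    (U : Set (EuclideanSpace ℝ (Fin n))) (hUopen : IsOpen U)
    (H : EuclideanSpace ℝ (Fin n) → ℝ) (hH : ContDiff ℝ 1 H)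
    (u : EuclideanSpace ℝ (Fin n) → ℝ) (hu : ContDiffOn ℝ 3 u U)
    (heq : ∀ x ∈ U, H (gradient u x) = ε * lap u x)
    (α β : ℝ)
    (z : EuclideanSpace ℝ (Fin n) → ℝ)
    (hz : ∀ x, z x = α * ⟪x, gradient u x⟫ + β * u x) :
    ∀ x ∈ U,
      ⟪gradient H (gradient u x), gradient z x⟫ - ε * lap z x
      = (α + β) * ⟪gradient H (gradient u x), gradient u x⟫ - (2 * α + β) * (ε * lap u x) := by
  intro x hx
  have hU : U ∈ 𝓝 x := hUopen.mem_nhds hx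
  have hu3 : ContDiffAt ℝ 3 u x := hu.contDiffAt hU
  have hu2 : ContDiffAt ℝ 2 u x := hu3.of_le (by norm_num)
  have hz_euler : z = fun y => α * euler u y + β * u y :=
    funext fun y => by rw [hz, inner_gradient_eq_euler]
  set w := gradient H (gradient u x)
  have hPDE : euler (fun y => fderiv ℝ u y w) x = ε * euler (lap u) x := by
    have hev : (fun y => H (gradient u y)) =ᶠ[𝓝 x] fun y => ε * lap u y :=
      Filter.eventually_of_mem hU heq
    rw [euler, ← fderiv_comp_gradient_apply hu2 (hH.differentiable one_ne_zero _), hev.fderiv_eq,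
      fderiv_const_mul hu3.differentiableAt_lap]
    rfl
  have hgrad : ⟪w, gradient z x⟫ = α * (euler (fun y => fderiv ℝ u y w) x + ⟪w, gradient u x⟫)
      + β * ⟪w, gradient u x⟫ := by
    rw [real_inner_comm, inner_gradient_left, hz_euler, fderiv_const_mul_add_const_mul_apply
      hu2.differentiableAt_euler (hu2.differentiableAt two_ne_zero), fderiv_euler_apply hu2,
      real_inner_comm, inner_gradient_left]
  have hlap : lap z x = α * (euler (lap u) x + 2 * lap u x) + β * lap u x := by
    rw [hz_euler, lap_const_mul_add_const_mul (hu3.contDiffAt_euler (m := 2)) hu2, lap_euler hu3]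
  rw [hgrad, hlap, hPDE]
  ring

theorem stmt9 (n : ℕ) (hn : 1 ≤ n) (ε : ℝ) (hε : 0 < ε)
    (U : Set (EuclideanSpace ℝ (Fin n))) (hUopen : IsOpen U)
    (H : EuclideanSpace ℝ (Fin n) → ℝ) (hH : ContDiff ℝ 1 H)
    (u : EuclideanSpace ℝ (Fin n) → ℝ) (hu : ContDiffOn ℝ 3 u U)
    (heq : ∀ x ∈ U, H (gradient u x) = ε * lap u x)
    (α β : ℝ)
    (z : EuclideanSpace ℝ (Fin n) → ℝ)
    (hz : ∀ x, z x = α * ⟪x, gradient u x⟫ + β * u x) :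
    ∀ x ∈ U,
      ⟪gradient H (gradient u x), gradient z x⟫ - ε * lap z x
      = (α + β) * ⟪gradient H (gradient u x), gradient u x⟫ - (2 * α + β) * (ε * lap u x) :=
  stmt9_general n ε U hUopen H hH u hu heq α β z hz
end

section
/- Let n ≥ 1, ε > 0, let U ⊆ ℝⁿ be open, let H : ℝⁿ → ℝ be continuously differentiable and satisfy (H3): there exist γ, δ > 0 such that ∇H(p)·p − γ H(p) ≥ δ for all p ∈ ℝⁿ. Let u : U → ℝ be three times continuously differentiable and satisfy H(∇u(x)) = ε Δu(x) for every x ∈ U. Let α, β be real numbers with α + β > 0 and 2α + β = γ(α + β), and define z(x) := α (x · ∇u(x)) + β u(x). Then at every x ∈ U one has ∇H(∇u(x)) · ∇z(x) − ε Δz(x) ≥ (α + β) δ > 0. -/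
open scoped RealInnerProductSpace

/-!
With `p = ∇u(x)`, the symmetry of `D²u` and `D³u` gives `∇z(x) = (α + β) p + α D²u(x) x` and
`Δz(x) = (2α + β) Δu(x) + α ∂ₓΔu(x)`, where `∂ₓ` is the derivative in the direction of the point `x`.
Differentiating `H(∇u) = ε Δu` in that direction gives `∇H(p) · D²u(x) x = ε ∂ₓΔu(x)`, so the
third-order terms cancel and, as `2α + β = γ (α + β)`,
`∇H(p) · ∇z(x) − ε Δz(x) = (α + β) (∇H(p) · p − γ H(p))`.
-/

section
variable {𝕜 E F G : Type*} [NontriviallyNormedField 𝕜] [NormedAddCommGroup E] [NormedSpace 𝕜 E]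
  [NormedAddCommGroup F] [NormedSpace 𝕜 F] [NormedAddCommGroup G] [NormedSpace 𝕜 G]

theorem HasFDerivAt.clm_apply_self {c : E → E →L[𝕜] F} {c' : E →L[𝕜] E →L[𝕜] F} {x : E}
    (hc : HasFDerivAt c c' x) : HasFDerivAt (fun y => c y y) (c x + c'.flip x) x := by
  simpa using hc.clm_apply (hasFDerivAt_id x)

theorem fderiv_clm_apply_const_apply {c : E → F →L[𝕜] G} {x : E} (hc : DifferentiableAt 𝕜 c x)
    (v : F) (w : E) : fderiv 𝕜 (fun y => c y v) x w = fderiv 𝕜 c x w v := by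
  simp [fderiv_clm_apply hc (differentiableAt_const v)]

end

section
variable {E F : Type*} [NormedAddCommGroup E] [NormedSpace ℝ E]
  [NormedAddCommGroup F] [NormedSpace ℝ F]

/-- The paper's `z = α (x · ∇u) + β u`, with `x · ∇u(x)` written as `Du(x) x`. -/
noncomputable def eulerComb (α β : ℝ) (u : E → F) (y : E) : F := α • fderiv ℝ u y y + β • u y

variable {α β : ℝ} {u : E → F} {x : E}

theorem hasFDerivAt_eulerComb (hu : ContDiffAt ℝ 2 u x) :
    HasFDerivAt (eulerComb α β u) ((α + β) • fderiv ℝ u x + α • fderiv ℝ (fderiv ℝ u) x x) x := by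
  have hD1 : HasFDerivAt u (fderiv ℝ u x) x := (hu.differentiableAt (by norm_num)).hasFDerivAt
  have hD2 : HasFDerivAt (fderiv ℝ u) (fderiv ℝ (fderiv ℝ u) x) x :=
    ((hu.fderiv_right (m := 1) le_rfl).differentiableAt one_ne_zero).hasFDerivAt
  refine ((hD2.clm_apply_self.const_smul α).add (hD1.const_smul β)).congr_fderiv ?_
  ext v
  simp only [add_apply, FunLike.coe_smul, Pi.smul_apply,
    ContinuousLinearMap.flip_apply, (hu.isSymmSndFDerivAt (by simp)) v x]
  module

theorem fderiv_eulerComb (hu : ContDiffAt ℝ 2 u x) :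
    fderiv ℝ (eulerComb α β u) x = (α + β) • fderiv ℝ u x + α • fderiv ℝ (fderiv ℝ u) x x :=
  (hasFDerivAt_eulerComb hu).fderiv

theorem hasFDerivAt_fderiv_eulerComb (hu : ContDiffAt ℝ 3 u x) :
    HasFDerivAt (fderiv ℝ (eulerComb α β u))
      ((2 * α + β) • fderiv ℝ (fderiv ℝ u) x + α • fderiv ℝ (fderiv ℝ (fderiv ℝ u)) x x) x := by
  have hDu : ContDiffAt ℝ 2 (fderiv ℝ u) x := hu.fderiv_right (by norm_num)
  have hD2 : HasFDerivAt (fderiv ℝ u) (fderiv ℝ (fderiv ℝ u) x) x :=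
    (hDu.differentiableAt (by norm_num)).hasFDerivAt
  have hD3 : HasFDerivAt (fderiv ℝ (fderiv ℝ u)) (fderiv ℝ (fderiv ℝ (fderiv ℝ u)) x) x :=
    ((hDu.fderiv_right (m := 1) (by norm_num)).differentiableAt one_ne_zero).hasFDerivAt
  have hev : fderiv ℝ (eulerComb α β u) =ᶠ[nhds x]
      fun y => (α + β) • fderiv ℝ u y + α • fderiv ℝ (fderiv ℝ u) y y := by
    filter_upwards [hu.eventually (by simp)] with y hy
    exact fderiv_eulerComb (hy.of_le (by norm_num))
  refine HasFDerivAt.congr_of_eventuallyEq ?_ hev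
  refine ((hD2.const_smul (α + β)).add (hD3.clm_apply_self.const_smul α)).congr_fderiv ?_
  ext v w
  simp only [add_apply, FunLike.coe_smul, Pi.smul_apply,
    ContinuousLinearMap.flip_apply, (hDu.isSymmSndFDerivAt (by simp)) v x]
  module

end

section
open InnerProductSpace

variable {E : Type*} [NormedAddCommGroup E] [InnerProductSpace ℝ E] [CompleteSpace E]

/-- Over `ℝ` the conjugate-linear inverse of `toDual` is linear. -/
noncomputable def realToDualSymm : StrongDual ℝ E →L[ℝ] E :=
  ((toDual ℝ E).symm.toContinuousLinearEquiv : StrongDual ℝ E →SL[starRingEnd ℝ] E)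

theorem inner_realToDualSymm (φ : StrongDual ℝ E) (v : E) : ⟪v, realToDualSymm φ⟫ = φ v := by
  rw [real_inner_comm]
  exact toDual_symm_apply

theorem hasFDerivAt_gradient {u : E → ℝ} {x : E} (hu : DifferentiableAt ℝ (fderiv ℝ u) x) :
    HasFDerivAt (gradient u) (realToDualSymm.comp (fderiv ℝ (fderiv ℝ u) x)) x :=
  realToDualSymm.hasFDerivAt.comp x hu.hasFDerivAt

theorem hasFDerivAt_comp_gradient {H u : E → ℝ} {x : E}
    (hH : DifferentiableAt ℝ H (gradient u x)) (hu : DifferentiableAt ℝ (fderiv ℝ u) x) :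
    HasFDerivAt (fun y => H (gradient u y))
      ((fderiv ℝ (fderiv ℝ u) x).flip (gradient H (gradient u x))) x := by
  refine (hH.hasFDerivAt.comp x (hasFDerivAt_gradient hu)).congr_fderiv ?_
  ext w
  simp [← inner_gradient_left, inner_realToDualSymm]

end

section
variable {n : ℕ} {u : EuclideanSpace ℝ (Fin n) → ℝ} {x : EuclideanSpace ℝ (Fin n)}

local notation "e" => fun i : Fin n => EuclideanSpace.single i (1 : ℝ)

theorem lap_eq_sum_fderiv_fderiv (hu : DifferentiableAt ℝ (fderiv ℝ u) x) :
    lap u x = ∑ i, fderiv ℝ (fderiv ℝ u) x (e i) (e i) :=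
  Finset.sum_congr rfl fun _ _ => fderiv_clm_apply_const_apply hu _ _

theorem hasFDerivAt_lap (hu : ContDiffAt ℝ 3 u x) :
    HasFDerivAt (lap u) (∑ i, ((fderiv ℝ (fderiv ℝ (fderiv ℝ u)) x).flip (e i)).flip (e i)) x := by
  have hD3 : HasFDerivAt (fderiv ℝ (fderiv ℝ u)) (fderiv ℝ (fderiv ℝ (fderiv ℝ u)) x) x :=
    (((hu.fderiv_right (m := 2) (by norm_num)).fderiv_right (m := 1) (by norm_num)).differentiableAt
      one_ne_zero).hasFDerivAt
  have hev : lap u =ᶠ[nhds x] fun y => ∑ i, fderiv ℝ (fderiv ℝ u) y (e i) (e i) := by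
    filter_upwards [hu.eventually (by simp)] with y hy
    exact lap_eq_sum_fderiv_fderiv
      ((hy.fderiv_right (m := 1) (by norm_num)).differentiableAt one_ne_zero)
  refine HasFDerivAt.congr_of_eventuallyEq ?_ hev
  refine (HasFDerivAt.fun_sum fun _ _ =>
    (hD3.clm_apply (hasFDerivAt_const _ _)).clm_apply (hasFDerivAt_const _ _)).congr_fderiv ?_
  ext w
  simp

theorem lap_eulerComb {α β : ℝ} (hu : ContDiffAt ℝ 3 u x) :
    lap (eulerComb α β u) x =
      (2 * α + β) * lap u x + α * ∑ i, fderiv ℝ (fderiv ℝ (fderiv ℝ u)) x x (e i) (e i) := by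
  have hD2 := hasFDerivAt_fderiv_eulerComb (α := α) (β := β) hu
  rw [lap_eq_sum_fderiv_fderiv hD2.differentiableAt, hD2.fderiv,
    lap_eq_sum_fderiv_fderiv ((hu.fderiv_right (m := 1) (by norm_num)).differentiableAt one_ne_zero),
    Finset.mul_sum, Finset.mul_sum, ← Finset.sum_add_distrib]
  simp

end

theorem stmt10_general (n : ℕ) (ε : ℝ)
    (U : Set (EuclideanSpace ℝ (Fin n))) (hUopen : IsOpen U)
    (H : EuclideanSpace ℝ (Fin n) → ℝ) (hH : ContDiff ℝ 1 H)
    (γ δ : ℝ) (hδ : 0 < δ)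
    (hH3 : ∀ p, ⟪gradient H p, p⟫ - γ * H p ≥ δ)
    (u : EuclideanSpace ℝ (Fin n) → ℝ) (hu : ContDiffOn ℝ 3 u U)
    (heq : ∀ x ∈ U, H (gradient u x) = ε * lap u x)
    (α β : ℝ) (hαβ : 0 < α + β) (hγαβ : 2 * α + β = γ * (α + β))
    (z : EuclideanSpace ℝ (Fin n) → ℝ)
    (hz : ∀ x, z x = α * ⟪x, gradient u x⟫ + β * u x) :
    ∀ x ∈ U,
      ⟪gradient H (gradient u x), gradient z x⟫ - ε * lap z x ≥ (α + β) * δ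
      ∧ 0 < (α + β) * δ := by
  intro x hx
  refine ⟨?_, mul_pos hαβ hδ⟩
  have hu3 : ContDiffAt ℝ 3 u x := hu.contDiffAt (hUopen.mem_nhds hx)
  have hD2 : DifferentiableAt ℝ (fderiv ℝ u) x :=
    (hu3.fderiv_right (m := 1) (by norm_num)).differentiableAt one_ne_zero
  have hz_eq : z = eulerComb α β u :=
    funext fun y => by rw [hz, real_inner_comm, inner_gradient_left]; rfl
  set p := gradient u x
  set g := gradient H p
  set S := ∑ i, fderiv ℝ (fderiv ℝ (fderiv ℝ u)) x x (EuclideanSpace.single i 1)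
    (EuclideanSpace.single i 1)
  have hgrad_z : ⟪g, gradient z x⟫ = (α + β) * ⟪g, p⟫ + α * fderiv ℝ (fderiv ℝ u) x x g := by
    rw [real_inner_comm, inner_gradient_left, hz_eq, fderiv_eulerComb (hu3.of_le (by norm_num)),
      real_inner_comm, inner_gradient_left]
    simp
  have hPDE_diff : fderiv ℝ (fderiv ℝ u) x x g = ε * S := by
    have heq_near : (fun y => H (gradient u y)) =ᶠ[nhds x] fun y => ε * lap u y := by
      filter_upwards [hUopen.mem_nhds hx] using heq
    have := (hasFDerivAt_comp_gradient (hH.differentiable one_ne_zero _) hD2).unique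
      (((hasFDerivAt_lap hu3).const_mul ε).congr_of_eventuallyEq heq_near)
    simpa [S, Finset.mul_sum] using congr($this x)
  have hlap_z : lap z x = (2 * α + β) * lap u x + α * S := hz_eq ▸ lap_eulerComb hu3
  calc ⟪g, gradient z x⟫ - ε * lap z x = (α + β) * (⟪g, p⟫ - γ * H p) := by
        rw [hgrad_z, hlap_z, hPDE_diff, heq x hx]
        linear_combination (-(ε * lap u x)) * hγαβ
    _ ≥ (α + β) * δ := mul_le_mul_of_nonneg_left (hH3 p) hαβ.le

theorem stmt10 (n : ℕ) (hn : 1 ≤ n) (ε : ℝ) (hε : 0 < ε)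
    (U : Set (EuclideanSpace ℝ (Fin n))) (hUopen : IsOpen U)
    (H : EuclideanSpace ℝ (Fin n) → ℝ) (hH : ContDiff ℝ 1 H)
    (γ δ : ℝ) (hγ : 0 < γ) (hδ : 0 < δ)
    (hH3 : ∀ p, ⟪gradient H p, p⟫ - γ * H p ≥ δ)
    (u : EuclideanSpace ℝ (Fin n) → ℝ) (hu : ContDiffOn ℝ 3 u U)
    (heq : ∀ x ∈ U, H (gradient u x) = ε * lap u x)
    (α β : ℝ) (hαβ : 0 < α + β) (hγαβ : 2 * α + β = γ * (α + β))
    (z : EuclideanSpace ℝ (Fin n) → ℝ)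
    (hz : ∀ x, z x = α * ⟪x, gradient u x⟫ + β * u x) :
    ∀ x ∈ U,
      ⟪gradient H (gradient u x), gradient z x⟫ - ε * lap z x ≥ (α + β) * δ
      ∧ 0 < (α + β) * δ :=
  stmt10_general n ε U hUopen H hH γ δ hδ hH3 u hu heq α β hαβ hγαβ z hz
end

section
/- Let n ≥ 1, ε > 0, let U ⊂ ℝⁿ be a bounded open set, and let H : ℝⁿ → ℝ be smooth with H(0) < 0, coercive (H(p)/|p| → ∞ as |p| → ∞), and satisfying (H3): there exist γ, δ > 0 such that ∇H(p)·p − γ H(p) ≥ δ for all p ∈ ℝⁿ. Suppose u and v are smooth on an open neighborhood of the closure of U, both satisfy H(∇w(x)) = ε Δw(x) for all x ∈ U (for w = u and w = v), and both vanish on ∂U. Then u = v on the closure of U. -/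
open scoped RealInnerProductSpace

open Filter Set

set_option maxHeartbeats 1000000
set_option synthInstance.maxHeartbeats 400000


private lemma second_deriv_test_max {f g : ℝ → ℝ} {L : ℝ}
    (hmax : IsLocalMax f 0)
    (hf : ∀ᶠ t in nhds (0:ℝ), HasDerivAt f (g t) t)
    (hg : HasDerivAt g L 0) : L ≤ 0 := by
  by_contra hL
  push_neg at hL
  have hg0 : g 0 = 0 := hmax.hasDerivAt_eq_zero hf.self_of_nhds
  have hslope : Filter.Tendsto (slope g 0) (nhdsWithin 0 {(0:ℝ)}ᶜ) (nhds L) :=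
    hasDerivAt_iff_tendsto_slope.1 hg
  have hmono : nhdsWithin (0:ℝ) (Set.Ioi 0) ≤ nhdsWithin 0 {(0:ℝ)}ᶜ :=
    nhdsWithin_mono _ (fun x hx => ne_of_gt hx)
  have h1 : ∀ᶠ t in nhdsWithin (0:ℝ) (Set.Ioi 0), 0 < g t := by
    filter_upwards [hmono (hslope.eventually (eventually_gt_nhds hL)),
      self_mem_nhdsWithin] with t ht ht'
    have hs : slope g 0 t = g t / t := by simp [slope_def_field, hg0]
    rw [hs] at ht
    have : (g t / t) * t > 0 := mul_pos ht ht'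
    rwa [div_mul_cancel₀] at this
    exact ne_of_gt ht'
  have hall : ∀ᶠ t in nhdsWithin (0:ℝ) (Set.Ioi 0),
      (0 < g t ∧ HasDerivAt f (g t) t ∧ f t ≤ f 0) := by
    filter_upwards [h1, (hf.filter_mono nhdsWithin_le_nhds),
      (hmax.filter_mono nhdsWithin_le_nhds)] with t h1 h2 h3
    exact ⟨h1, h2, h3⟩
  rw [eventually_nhdsWithin_iff] at hall
  obtain ⟨η, hη, hP⟩ := Metric.eventually_nhds_iff.1 hall
  set b := η/2 with hb
  have hb0 : 0 < b := by positivity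
  have hbη : ∀ t, 0 < t → t ≤ b → (0 < g t ∧ HasDerivAt f (g t) t ∧ f t ≤ f 0) := by
    intro t ht htb
    have : dist t 0 < η := by
      rw [Real.dist_eq, sub_zero, abs_of_pos ht]
      linarith
    exact hP this ht
  have hmono2 : StrictMonoOn f (Set.Icc 0 b) := by
    apply strictMonoOn_of_deriv_pos (convex_Icc 0 b)
    · intro t ht
      rcases eq_or_lt_of_le ht.1 with h | h
      · exact (h ▸ hf.self_of_nhds.continuousAt).continuousWithinAt
      · exact ((hbη t h ht.2).2.1.continuousAt).continuousWithinAt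
    · intro t ht
      rw [interior_Icc] at ht
      obtain ⟨hgt, hd, _⟩ := hbη t ht.1 ht.2.le
      rw [hd.deriv]
      exact hgt
  have : f 0 < f b := hmono2 ⟨le_refl 0, hb0.le⟩ ⟨hb0.le, le_refl b⟩ hb0
  have := (hbη b hb0 le_rfl).2.2
  linarith

private lemma pd2_nonpos_of_isLocalMax {n : ℕ} {w : EuclideanSpace ℝ (Fin n) → ℝ}
    {V : Set (EuclideanSpace ℝ (Fin n))} (hV : IsOpen V)
    (hw : ContDiffOn ℝ (⊤ : ℕ∞) w V) {x₀ : EuclideanSpace ℝ (Fin n)} (hx₀ : x₀ ∈ V)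
    (hmax : IsLocalMax w x₀) (i : Fin n) : pd2 w x₀ i i ≤ 0 := by
  set e := EuclideanSpace.single i (1:ℝ) with he
  set c : ℝ → EuclideanSpace ℝ (Fin n) := fun t => x₀ + t • e with hc
  have hc0 : c 0 = x₀ := by simp [hc]
  have hccont : Continuous c := by fun_prop
  have hcd : ∀ t, HasDerivAt c e t := by
    intro t
    simpa [hc] using ((hasDerivAt_id t).smul_const e).const_add x₀
  have htend : Filter.Tendsto c (nhds 0) (nhds x₀) := by
    have := hccont.continuousAt (x := (0:ℝ))
    rwa [ContinuousAt, hc0] at this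
  have hVc : ∀ᶠ t in nhds (0:ℝ), c t ∈ V :=
    htend.eventually (hV.eventually_mem hx₀)
  set F₁ : EuclideanSpace ℝ (Fin n) → ℝ := fun y => fderiv ℝ w y e with hF₁
  have hfder : ContDiffOn ℝ (⊤ : ℕ∞) (fderiv ℝ w) V := hw.fderiv_of_isOpen hV (by simp)
  have hfderdiff : DifferentiableAt ℝ (fderiv ℝ w) x₀ :=
    (hfder.differentiableOn (by simp)).differentiableAt (hV.mem_nhds hx₀)
  have hF₁diff : DifferentiableAt ℝ F₁ x₀ :=
    (ContinuousLinearMap.apply ℝ ℝ e).differentiableAt.comp x₀ hfderdiff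
  set g : ℝ → ℝ := fun t => F₁ (c t) with hgdef
  have hg : HasDerivAt g (fderiv ℝ F₁ x₀ e) 0 := by
    have h1 : HasFDerivAt F₁ (fderiv ℝ F₁ x₀) (c 0) := by
      rw [hc0]; exact hF₁diff.hasFDerivAt
    exact h1.comp_hasDerivAt 0 (hcd 0)
  set f : ℝ → ℝ := fun t => w (c t) with hfdef
  have hf : ∀ᶠ t in nhds (0:ℝ), HasDerivAt f (g t) t := by
    filter_upwards [hVc] with t ht
    have hwd : HasFDerivAt w (fderiv ℝ w (c t)) (c t) :=
      ((hw.differentiableOn (by simp)).differentiableAt (hV.mem_nhds ht)).hasFDerivAt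
    exact hwd.comp_hasDerivAt t (hcd t)
  have hmaxf : IsLocalMax f 0 := by
    have := htend.eventually hmax
    simpa [hfdef, IsLocalMax, IsMaxFilter, hc0] using this
  have := second_deriv_test_max hmaxf hf hg
  simpa [pd2, hF₁, he] using this

private lemma diffAt_fderiv_apply {n : ℕ} {f : EuclideanSpace ℝ (Fin n) → ℝ}
    {V : Set (EuclideanSpace ℝ (Fin n))} (hV : IsOpen V) (hf : ContDiffOn ℝ (⊤ : ℕ∞) f V)
    {x : EuclideanSpace ℝ (Fin n)} (hx : x ∈ V) (e : EuclideanSpace ℝ (Fin n)) :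
    DifferentiableAt ℝ (fun y => fderiv ℝ f y e) x := by
  have hfder : ContDiffOn ℝ (⊤ : ℕ∞) (fderiv ℝ f) V := hf.fderiv_of_isOpen hV (by simp)
  exact (ContinuousLinearMap.apply ℝ ℝ e).differentiableAt.comp x
    ((hfder.differentiableOn (by simp)).differentiableAt (hV.mem_nhds hx))

private lemma fderiv_comb {n : ℕ} {f g : EuclideanSpace ℝ (Fin n) → ℝ}
    {V : Set (EuclideanSpace ℝ (Fin n))} (hV : IsOpen V)
    (hf : ContDiffOn ℝ (⊤ : ℕ∞) f V) (hg : ContDiffOn ℝ (⊤ : ℕ∞) g V)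
    {x : EuclideanSpace ℝ (Fin n)} (hx : x ∈ V) (a b : ℝ) :
    fderiv ℝ (fun y => a * f y + b * g y) x = a • fderiv ℝ f x + b • fderiv ℝ g x := by
  have hfd : DifferentiableAt ℝ f x :=
    (hf.differentiableOn (by simp)).differentiableAt (hV.mem_nhds hx)
  have hgd : DifferentiableAt ℝ g x :=
    (hg.differentiableOn (by simp)).differentiableAt (hV.mem_nhds hx)
  rw [fderiv_fun_add ((hfd.const_mul a)) ((hgd.const_mul b)), fderiv_const_mul hfd,
    fderiv_const_mul hgd]

private lemma pd2_comb {n : ℕ} {f g : EuclideanSpace ℝ (Fin n) → ℝ}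
    {V : Set (EuclideanSpace ℝ (Fin n))} (hV : IsOpen V)
    (hf : ContDiffOn ℝ (⊤ : ℕ∞) f V) (hg : ContDiffOn ℝ (⊤ : ℕ∞) g V)
    {x : EuclideanSpace ℝ (Fin n)} (hx : x ∈ V) (a b : ℝ) (i k : Fin n) :
    pd2 (fun y => a * f y + b * g y) x i k = a * pd2 f x i k + b * pd2 g x i k := by
  set ek := EuclideanSpace.single k (1:ℝ)
  set ei := EuclideanSpace.single i (1:ℝ)
  have hev : (fun y => fderiv ℝ (fun z => a * f z + b * g z) y ek)
      =ᶠ[nhds x] (fun y => a * (fderiv ℝ f y ek) + b * (fderiv ℝ g y ek)) := by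
    filter_upwards [hV.eventually_mem hx] with y hy
    rw [fderiv_comb hV hf hg hy a b]
    simp
  have h1 : DifferentiableAt ℝ (fun y => fderiv ℝ f y ek) x := diffAt_fderiv_apply hV hf hx ek
  have h2 : DifferentiableAt ℝ (fun y => fderiv ℝ g y ek) x := diffAt_fderiv_apply hV hg hx ek
  have : pd2 (fun y => a * f y + b * g y) x i k
      = fderiv ℝ (fun y => a * (fderiv ℝ f y ek) + b * (fderiv ℝ g y ek)) x ei := by
    rw [pd2, hev.fderiv_eq]
  rw [this, fderiv_fun_add (h1.const_mul a) (h2.const_mul b), fderiv_const_mul h1,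
    fderiv_const_mul h2]
  simp only [ContinuousLinearMap.add_apply, ContinuousLinearMap.coe_smul',
    Pi.smul_apply, smul_eq_mul, pd2]
  rfl

section phi
variable {n : ℕ} (α : ℝ) (j : Fin n)

private noncomputable def phi (x : EuclideanSpace ℝ (Fin n)) : ℝ := Real.exp (α * x j)

private lemma phi_hasFDerivAt (x : EuclideanSpace ℝ (Fin n)) :
    HasFDerivAt (phi α j) ((α * Real.exp (α * x j)) •
      (EuclideanSpace.proj j : EuclideanSpace ℝ (Fin n) →L[ℝ] ℝ)) x := by
  have hlin : HasFDerivAt (fun y : EuclideanSpace ℝ (Fin n) => α * y j)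
      (α • (EuclideanSpace.proj j : EuclideanSpace ℝ (Fin n) →L[ℝ] ℝ)) x :=
    (α • (EuclideanSpace.proj j : EuclideanSpace ℝ (Fin n) →L[ℝ] ℝ)).hasFDerivAt
  have hexp := (Real.hasDerivAt_exp (α * x j)).comp_hasFDerivAt x hlin
  show HasFDerivAt (Real.exp ∘ fun y : EuclideanSpace ℝ (Fin n) => α * y j) _ x
  simpa [smul_smul, mul_comm] using hexp

private lemma phi_fderiv (x : EuclideanSpace ℝ (Fin n)) :
    fderiv ℝ (phi α j) x = (α * Real.exp (α * x j)) •
      (EuclideanSpace.proj j : EuclideanSpace ℝ (Fin n) →L[ℝ] ℝ) :=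
  (phi_hasFDerivAt α j x).fderiv

private lemma phi_contDiff : ContDiff ℝ (⊤ : ℕ∞) (phi α j) := by
  apply Real.contDiff_exp.comp
  exact contDiff_const.mul (EuclideanSpace.proj (𝕜 := ℝ) j : EuclideanSpace ℝ (Fin n) →L[ℝ] ℝ).contDiff

private lemma phi_fderiv_apply (x : EuclideanSpace ℝ (Fin n)) (i : Fin n) :
    fderiv ℝ (phi α j) x (EuclideanSpace.single i 1)
      = (if i = j then 1 else 0) * α * Real.exp (α * x j) := by
  rw [phi_fderiv, ContinuousLinearMap.smul_apply]
  have hpr : (EuclideanSpace.proj j : EuclideanSpace ℝ (Fin n) →L[ℝ] ℝ)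
      (EuclideanSpace.single i 1) = if i = j then 1 else 0 := by
    simp [PiLp.proj_apply, EuclideanSpace.single_apply, eq_comm]
  rw [hpr]
  by_cases h : i = j
  · simp [h]
  · simp [h]

private lemma phi_pd2 (x : EuclideanSpace ℝ (Fin n)) (i : Fin n) :
    pd2 (phi α j) x i i = (if i = j then 1 else 0) * α ^ 2 * Real.exp (α * x j) := by
  have hev : (fun y => fderiv ℝ (phi α j) y (EuclideanSpace.single i 1))
      = (fun y => ((if i = j then 1 else 0) * α) * phi α j y) := by
    funext y
    rw [phi_fderiv_apply]
    simp only [phi]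
  rw [pd2, hev, fderiv_const_mul ((phi_contDiff α j).differentiable (by simp) x),
    ContinuousLinearMap.smul_apply, phi_fderiv_apply]
  by_cases h : i = j <;> simp [h] <;> ring

private lemma phi_lap (x : EuclideanSpace ℝ (Fin n)) :
    lap (phi α j) x = α ^ 2 * Real.exp (α * x j) := by
  rw [lap]
  have : ∀ i, pd2 (phi α j) x i i = if i = j then α ^ 2 * Real.exp (α * x j) else 0 := by
    intro i
    rw [phi_pd2]
    by_cases h : i = j <;> simp [h]
  simp only [this]
  simp

private lemma abs_coord_le_norm (y : EuclideanSpace ℝ (Fin n)) : |y j| ≤ ‖y‖ := by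
  have h1 : (y j : ℝ) = inner ℝ (EuclideanSpace.single j (1:ℝ)) y := by
    rw [EuclideanSpace.inner_single_left]; simp
  rw [h1]
  calc |inner ℝ (EuclideanSpace.single j (1:ℝ)) y| ≤ ‖EuclideanSpace.single j (1:ℝ)‖ * ‖y‖ :=
        abs_real_inner_le_norm _ _
    _ = ‖y‖ := by rw [EuclideanSpace.norm_single]; simp

private lemma phi_fderiv_norm_le (x : EuclideanSpace ℝ (Fin n)) (hα : 0 ≤ α) :
    ‖fderiv ℝ (phi α j) x‖ ≤ α * Real.exp (α * x j) := by
  rw [phi_fderiv]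
  apply ContinuousLinearMap.opNorm_le_bound _ (by positivity)
  intro y
  rw [ContinuousLinearMap.smul_apply]
  have h2 : ((EuclideanSpace.proj j : EuclideanSpace ℝ (Fin n) →L[ℝ] ℝ) y : ℝ) = y j := rfl
  rw [smul_eq_mul, Real.norm_eq_abs, abs_mul, h2,
    abs_of_nonneg (show (0:ℝ) ≤ α * Real.exp (α * x j) by positivity)]
  have h3 : (0:ℝ) ≤ α * Real.exp (α * x j) := by positivity
  have h4 := mul_le_mul_of_nonneg_left (abs_coord_le_norm j y) h3
  linarith

end phi

private lemma key {n : ℕ} (hn : 1 ≤ n) {ε : ℝ} (hε : 0 < ε)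
    {U : Set (EuclideanSpace ℝ (Fin n))} (hUopen : IsOpen U) (hUbd : Bornology.IsBounded U)
    {H : EuclideanSpace ℝ (Fin n) → ℝ} (hH : ContDiff ℝ (⊤ : ℕ∞) H)
    {u v : EuclideanSpace ℝ (Fin n) → ℝ}
    {V : Set (EuclideanSpace ℝ (Fin n))} (hVopen : IsOpen V) (hUV : closure U ⊆ V)
    (hu : ContDiffOn ℝ (⊤ : ℕ∞) u V) (hv : ContDiffOn ℝ (⊤ : ℕ∞) v V)
    (hueq : ∀ x ∈ U, H (gradient u x) = ε * lap u x)
    (hveq : ∀ x ∈ U, H (gradient v x) = ε * lap v x)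
    (hubc : ∀ x ∈ frontier U, u x = 0) (hvbc : ∀ x ∈ frontier U, v x = 0)
    {z : EuclideanSpace ℝ (Fin n)} (hz : z ∈ closure U) : u z ≤ v z := by
  classical
  have hKcomp : IsCompact (closure U) := hUbd.isCompact_closure
  have hKne : (closure U).Nonempty := ⟨z, hz⟩
  set j : Fin n := ⟨0, hn⟩ with hj
  -- bounds on gradients
  have hgu_cont : ContinuousOn (fderiv ℝ u) V :=
    hu.continuousOn_fderiv_of_isOpen hVopen (by simp)
  have hgv_cont : ContinuousOn (fderiv ℝ v) V :=
    hv.continuousOn_fderiv_of_isOpen hVopen (by simp)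
  obtain ⟨R₁, hR₁⟩ := hKcomp.exists_bound_of_continuousOn (hgu_cont.mono hUV)
  obtain ⟨R₂, hR₂⟩ := hKcomp.exists_bound_of_continuousOn (hgv_cont.mono hUV)
  set R := max R₁ R₂ with hR
  -- Lipschitz bound for H on the closed ball of radius R
  have hHd : Continuous (fderiv ℝ H) := (hH.fderiv_right (m := (⊤ : ℕ∞)) (by simp)).continuous
  obtain ⟨C₀, hC₀⟩ := (isCompact_closedBall (0 : EuclideanSpace ℝ (Fin n))
    R).exists_bound_of_continuousOn hHd.continuousOn
  set C := max C₀ 0 with hC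
  have hC0 : (0:ℝ) ≤ C := le_max_right _ _
  have hlip : ∀ p ∈ Metric.closedBall (0 : EuclideanSpace ℝ (Fin n)) R,
      ∀ q ∈ Metric.closedBall (0 : EuclideanSpace ℝ (Fin n)) R, ‖H p - H q‖ ≤ C * ‖p - q‖ := by
    intro p hp q hq
    exact Convex.norm_image_sub_le_of_norm_fderiv_le
      (fun y _ => hH.differentiable (by simp) y)
      (fun y hy => (hC₀ y hy).trans (le_max_left _ _)) (convex_closedBall _ _) hq hp
  set α := (C + 1) / ε with hα
  have hαpos : 0 < α := by positivity
  have hαε : ε * α = C + 1 := by rw [hα]; field_simp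
  obtain ⟨RK, hRK⟩ := hKcomp.isBounded.subset_closedBall 0
  set Emax := Real.exp (α * RK) with hEmax
  have hEmaxpos : 0 < Emax := Real.exp_pos _
  have hφle : ∀ x ∈ closure U, phi α j x ≤ Emax := by
    intro x hx
    apply Real.exp_le_exp.2
    apply mul_le_mul_of_nonneg_left _ hαpos.le
    calc x j ≤ |x j| := le_abs_self _
      _ ≤ ‖x‖ := abs_coord_le_norm j x
      _ ≤ RK := by simpa [dist_zero_right] using hRK hx
  -- main claim
  have hclaim : ∀ s : ℝ, 0 < s → u z - v z ≤ s * Emax := by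
    intro s hs
    set w : EuclideanSpace ℝ (Fin n) → ℝ := fun x => u x - v x with hwdef
    set ws : EuclideanSpace ℝ (Fin n) → ℝ := fun x => w x + s * phi α j x with hwsdef
    have hwsm : ContDiffOn ℝ (⊤ : ℕ∞) w V := hu.sub hv
    have hφsm : ContDiff ℝ (⊤ : ℕ∞) (phi α j) := phi_contDiff α j
    have hwssm : ContDiffOn ℝ (⊤ : ℕ∞) ws V := hwsm.add ((contDiff_const.mul hφsm).contDiffOn)
    have hwscont : ContinuousOn ws (closure U) := hwssm.continuousOn.mono hUV
    obtain ⟨x₀, hx₀K, hx₀max⟩ := hKcomp.exists_isMaxOn hKne hwscont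
    have hmax' : ∀ y ∈ closure U, ws y ≤ ws x₀ := isMaxOn_iff.1 hx₀max
    by_cases hx₀U : x₀ ∈ U
    · exfalso
      have hx₀V : x₀ ∈ V := hUV hx₀K
      set E := Real.exp (α * x₀ j) with hE
      have hEpos : 0 < E := Real.exp_pos _
      have hloc : IsLocalMax ws x₀ := by
        filter_upwards [hUopen.eventually_mem hx₀U] with y hy
        exact hmax' y (subset_closure hy)
      -- first order condition
      have hwsc : ws = fun y => 1 * w y + s * phi α j y := by
        funext y; simp [hwsdef]
      have hwc : w = fun y => 1 * u y + (-1) * v y := by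
        funext y; simp [hwdef]; ring
      have hfd0 : fderiv ℝ ws x₀ = 0 := hloc.fderiv_eq_zero
      have hfws : (1:ℝ) • fderiv ℝ w x₀ + s • fderiv ℝ (phi α j) x₀ = 0 := by
        rw [← fderiv_comb hVopen hwsm hφsm.contDiffOn hx₀V 1 s, ← hwsc, hfd0]
      have hfw : fderiv ℝ w x₀ = -(s • fderiv ℝ (phi α j) x₀) := by
        rw [one_smul] at hfws
        exact eq_neg_of_add_eq_zero_left hfws
      have hud : DifferentiableAt ℝ u x₀ :=
        (hu.differentiableOn (by simp)).differentiableAt (hVopen.mem_nhds hx₀V)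
      have hvd : DifferentiableAt ℝ v x₀ :=
        (hv.differentiableOn (by simp)).differentiableAt (hVopen.mem_nhds hx₀V)
      have hfwsub : fderiv ℝ w x₀ = fderiv ℝ u x₀ - fderiv ℝ v x₀ := fderiv_sub hud hvd
      have hnorm : ‖fderiv ℝ u x₀ - fderiv ℝ v x₀‖ ≤ s * (α * E) := by
        rw [← hfwsub, hfw, norm_neg, norm_smul, Real.norm_eq_abs, abs_of_pos hs]
        exact mul_le_mul_of_nonneg_left (phi_fderiv_norm_le α j x₀ hαpos.le) hs.le
      -- gradients
      have hgradsub : gradient u x₀ - gradient v x₀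
          = (InnerProductSpace.toDual ℝ (EuclideanSpace ℝ (Fin n))).symm
              (fderiv ℝ u x₀ - fderiv ℝ v x₀) := by
        simp [gradient, map_sub]
      have hgradnorm : ‖gradient u x₀ - gradient v x₀‖ ≤ s * (α * E) := by
        rw [hgradsub, LinearIsometryEquiv.norm_map]; exact hnorm
      have hgu_mem : gradient u x₀ ∈ Metric.closedBall (0 : EuclideanSpace ℝ (Fin n)) R := by
        rw [Metric.mem_closedBall, dist_zero_right]
        show ‖(InnerProductSpace.toDual ℝ (EuclideanSpace ℝ (Fin n))).symm (fderiv ℝ u x₀)‖ ≤ R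
        rw [LinearIsometryEquiv.norm_map]
        exact (hR₁ x₀ hx₀K).trans (le_max_left _ _)
      have hgv_mem : gradient v x₀ ∈ Metric.closedBall (0 : EuclideanSpace ℝ (Fin n)) R := by
        rw [Metric.mem_closedBall, dist_zero_right]
        show ‖(InnerProductSpace.toDual ℝ (EuclideanSpace ℝ (Fin n))).symm (fderiv ℝ v x₀)‖ ≤ R
        rw [LinearIsometryEquiv.norm_map]
        exact (hR₂ x₀ hx₀K).trans (le_max_right _ _)
      -- second order condition
      have hpd : ∀ i, pd2 ws x₀ i i ≤ 0 := fun i =>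
        pd2_nonpos_of_isLocalMax hVopen hwssm hx₀V hloc i
      have hlapws : lap ws x₀ = lap w x₀ + s * lap (phi α j) x₀ := by
        have h1 : ∀ i : Fin n, pd2 ws x₀ i i
            = 1 * pd2 w x₀ i i + s * pd2 (phi α j) x₀ i i := by
          intro i; rw [hwsc]; exact pd2_comb hVopen hwsm hφsm.contDiffOn hx₀V 1 s i i
        simp only [lap, h1, one_mul]
        rw [Finset.sum_add_distrib, ← Finset.mul_sum]
      have hlapw : lap w x₀ = lap u x₀ - lap v x₀ := by
        have h1 : ∀ i : Fin n, pd2 w x₀ i i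
            = 1 * pd2 u x₀ i i + (-1) * pd2 v x₀ i i := by
          intro i; rw [hwc]; exact pd2_comb hVopen hu hv hx₀V 1 (-1) i i
        simp only [lap, h1, one_mul, neg_one_mul]
        rw [Finset.sum_add_distrib, Finset.sum_neg_distrib]
        ring
      have hlapwsneg : lap ws x₀ ≤ 0 := Finset.sum_nonpos (fun i _ => hpd i)
      have hlapφ : lap (phi α j) x₀ = α ^ 2 * E := phi_lap α j x₀
      -- the equations
      have hHu : H (gradient u x₀) = ε * lap u x₀ := hueq x₀ hx₀U
      have hHv : H (gradient v x₀) = ε * lap v x₀ := hveq x₀ hx₀U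
      have habs : ‖H (gradient u x₀) - H (gradient v x₀)‖
          ≤ C * ‖gradient u x₀ - gradient v x₀‖ := hlip _ hgu_mem _ hgv_mem
      have hlow : H (gradient u x₀) - H (gradient v x₀) ≥ -(C * (s * (α * E))) := by
        rw [Real.norm_eq_abs] at habs
        have h2 : C * ‖gradient u x₀ - gradient v x₀‖ ≤ C * (s * (α * E)) :=
          mul_le_mul_of_nonneg_left hgradnorm hC0
        have h3 := (abs_le.1 (habs.trans h2)).1
        linarith
    -- combine
      have hkey : lap u x₀ - lap v x₀ ≤ -(s * (α ^ 2 * E)) := by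
        have := hlapwsneg
        rw [hlapws, hlapw, hlapφ] at this
        linarith
      have h5 : ε * (lap u x₀ - lap v x₀) ≥ -(C * (s * (α * E))) := by
        rw [mul_sub, ← hHu, ← hHv]; linarith
      have h6 : ε * (lap u x₀ - lap v x₀) ≤ ε * (-(s * (α ^ 2 * E))) :=
        mul_le_mul_of_nonneg_left hkey hε.le
      -- so ε * s * α² * E ≤ C * s * α * E, divide by s α E > 0 : ε α ≤ C, while ε α = C + 1
      have h7 : ε * α ≤ C := by
        have h8 : ε * (s * (α ^ 2 * E)) ≤ C * (s * (α * E)) := by linarith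
        have h9 : 0 < s * (α * E) := by positivity
        nlinarith [h8, h9]
      rw [hαε] at h7
      linarith
    · -- max attained on the boundary
      have hfr : x₀ ∈ frontier U := by
        rw [frontier, hUopen.interior_eq]
        exact ⟨hx₀K, hx₀U⟩
      have h1 : ws z ≤ ws x₀ := hmax' z hz
      have h2 : ws x₀ = s * phi α j x₀ := by
        simp [hwsdef, hwdef, hubc x₀ hfr, hvbc x₀ hfr]
      have h3 : phi α j x₀ ≤ Emax := hφle x₀ hx₀K
      have h4 : 0 < phi α j z := Real.exp_pos _
      have h5 : ws z = (u z - v z) + s * phi α j z := rfl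
      nlinarith [mul_pos hs h4]
  -- conclude
  have hfin : u z - v z ≤ 0 := by
    by_contra hcon
    push_neg at hcon
    have h1 := hclaim ((u z - v z) / (2 * Emax)) (by positivity)
    have h2 : (u z - v z) / (2 * Emax) * Emax = (u z - v z) / 2 := by
      field_simp
    rw [h2] at h1
    linarith
  linarith


theorem stmt18 (n : ℕ) (hn : 1 ≤ n) (ε : ℝ) (hε : 0 < ε)
    (U : Set (EuclideanSpace ℝ (Fin n))) (hUopen : IsOpen U) (hUbd : Bornology.IsBounded U)
    (H : EuclideanSpace ℝ (Fin n) → ℝ) (hH : ContDiff ℝ (⊤ : ℕ∞) H) (hH0 : H 0 < 0)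
    (hcoerc : Filter.Tendsto (fun p => H p / ‖p‖) (Filter.cocompact _) Filter.atTop)
    (γ δ : ℝ) (hγ : 0 < γ) (hδ : 0 < δ)
    (hH3 : ∀ p, ⟪gradient H p, p⟫ - γ * H p ≥ δ)
    (u v : EuclideanSpace ℝ (Fin n) → ℝ)
    (V : Set (EuclideanSpace ℝ (Fin n))) (hVopen : IsOpen V) (hUV : closure U ⊆ V)
    (hu : ContDiffOn ℝ (⊤ : ℕ∞) u V) (hv : ContDiffOn ℝ (⊤ : ℕ∞) v V)
    (hueq : ∀ x ∈ U, H (gradient u x) = ε * lap u x)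
    (hveq : ∀ x ∈ U, H (gradient v x) = ε * lap v x)
    (hubc : ∀ x ∈ frontier U, u x = 0) (hvbc : ∀ x ∈ frontier U, v x = 0) :
    Set.EqOn u v (closure U) := by
  intro x hx
  exact le_antisymm
    (key hn hε hUopen hUbd hH hVopen hUV hu hv hueq hveq hubc hvbc hx)
    (key hn hε hUopen hUbd hH hVopen hUV hv hu hveq hueq hvbc hubc hx)
end
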